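/- Let D be the unique ℚ-linear derivation of ℚ[x,y] satisfying D(x) = xy and D(y) = x, and work in the formal power series ring ℚ[x,y][[t]]. Put G = Σ_{n≥0} D^n(y) tⁿ/n!, C = Σ_{m≥0} (-1)^m (2x-y²)^m t^{2m}/(2m)!, and S = Σ_{m≥0} (-1)^m (2x-y²)^m t^{2m+1}/(2m+1)!. Then G · ((x-y²)S + yC) = x + y(2x-y²)S − (x-y²)C. (This is the Foata–Schützenberger generating function identity for the André polynomials E_n(x,y) = D^n(y), written with denominators cleared and the common factor √(2x-y²) cancelled.) -/

import Mathlib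

/-!
Extend `D` coefficientwise to a derivation `D̂` of `ℚ[x,y]⟦t⟧`. Since `D(Dⁿ y) = Dⁿ⁺¹ y`, the
series `G` satisfies `G' = D̂ G`. Writing `a = 2x - y²`, one has `D a = 0`, so `D̂` kills `S`
and `C`, while `S' = C` and `C' = -a S`. A direct computation then shows that both
`P = (x-y²)S + yC` and `Q = x + yaS - (x-y²)C` satisfy `H' = D̂ H - y H`, hence so does
`F = G P - Q`. As `F(0) = y·y - y² = 0`, comparing the coefficients of `tⁿ` in
`F' = D̂ F - y F` gives `(n+1) Fₙ₊₁ = D Fₙ - y Fₙ`, and `F = 0` by induction.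
-/

open MvPolynomial

/-- The generating function `G = ∑_{n≥0} Dⁿ(y) tⁿ/n!` of the André polynomials
`E_n(x,y) = Dⁿ(y)`, as a formal power series over `ℚ[x,y]`. -/
noncomputable def andreGen
    (D : Derivation ℚ (MvPolynomial (Fin 2) ℚ) (MvPolynomial (Fin 2) ℚ)) :
    PowerSeries (MvPolynomial (Fin 2) ℚ) :=
  PowerSeries.mk fun n => ((n.factorial : ℚ)⁻¹) • ((⇑D)^[n] (X 1))

/-- `C = ∑_{m≥0} (-1)^m (2x - y²)^m t^{2m}/(2m)!`. -/
noncomputable def cosSeries : PowerSeries (MvPolynomial (Fin 2) ℚ) :=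
  PowerSeries.mk fun j =>
    if Even j then ((-1 : ℚ) ^ (j / 2) * (j.factorial : ℚ)⁻¹) •
      ((2 * X 0 - X 1 ^ 2 : MvPolynomial (Fin 2) ℚ) ^ (j / 2))
    else 0

/-- `S = ∑_{m≥0} (-1)^m (2x - y²)^m t^{2m+1}/(2m+1)!`. -/
noncomputable def sinSeries : PowerSeries (MvPolynomial (Fin 2) ℚ) :=
  PowerSeries.mk fun j =>
    if Even j then 0
    else ((-1 : ℚ) ^ (j / 2) * (j.factorial : ℚ)⁻¹) •
      ((2 * X 0 - X 1 ^ 2 : MvPolynomial (Fin 2) ℚ) ^ (j / 2))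

theorem neg_pow_eq_neg_one_pow_smul {R : Type*} [CommRing R] [Algebra ℚ R] (a : R) (k : ℕ) :
    (-a) ^ k = (-1 : ℚ) ^ k • a ^ k := by
  rw [neg_pow, Algebra.smul_def, map_pow, map_neg, map_one]

namespace Derivation

@[simp]
theorem map_ofNat {A R M : Type*} [CommSemiring A] [CommSemiring R] [Algebra A R]
    [AddCommMonoid M] [Module A M] [Module R M] (d : Derivation A R M) (n : ℕ) [n.AtLeastTwo] :
    d (ofNat(n) : R) = 0 := by
  rw [← Nat.cast_ofNat]
  exact d.map_natCast n

open PowerSeries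

variable {A R : Type*} [CommRing A] [CommRing R] [Algebra A R]

noncomputable def mapCoeffsPowerSeries (d : Derivation A R R) : Derivation A R⟦X⟧ R⟦X⟧ :=
  mk'
    { toFun := fun f => PowerSeries.mk fun n => d (coeff n f)
      map_add' := fun f g => by ext n; simp
      map_smul' := fun a f => by ext n; simp }
    fun f g => by
      ext n
      rw [smul_eq_mul, smul_eq_mul, mul_comm g]
      simp only [LinearMap.coe_mk, AddHom.coe_mk, coeff_mk, smul_eq_mul, map_add,
        PowerSeries.coeff_mul, map_sum, leibniz, ← Finset.sum_add_distrib]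
      exact Finset.sum_congr rfl fun _ _ => by ring

@[simp]
theorem coeff_mapCoeffsPowerSeries (d : Derivation A R R) (f : R⟦X⟧) (n : ℕ) :
    coeff n (d.mapCoeffsPowerSeries f) = d (coeff n f) := by
  simp [mapCoeffsPowerSeries]

@[simp]
theorem mapCoeffsPowerSeries_C (d : Derivation A R R) (r : R) :
    d.mapCoeffsPowerSeries (PowerSeries.C r) = PowerSeries.C (d r) := by
  ext n
  simp only [coeff_mapCoeffsPowerSeries, PowerSeries.coeff_C]
  split_ifs <;> simp

end Derivation

namespace PowerSeries

section ODE

variable {A R : Type*} [CommRing A] [CommRing R] [Algebra A R] {d : Derivation A R R}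

theorem eq_zero_of_derivative_eq [IsAddTorsionFree R] {c : R} {F : R⟦X⟧}
    (h₀ : constantCoeff F = 0) (h : d⁄dX R F = d.mapCoeffsPowerSeries F + C c * F) : F = 0 := by
  ext n
  induction n with
  | zero => simpa using h₀
  | succ n ih =>
    have hn := congrArg (coeff n) h
    rw [coeff_derivative, map_add, coeff_C_mul, Derivation.coeff_mapCoeffsPowerSeries, ih,
      map_zero, d.map_zero, mul_zero, add_zero, mul_comm, ← Nat.cast_succ, ← nsmul_eq_mul,
      ← smul_zero n.succ] at hn
    exact IsAddTorsionFree.nsmul_right_injective n.succ_ne_zero hn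

theorem derivative_mul_sub_eq {c : R} {G P Q : R⟦X⟧}
    (hG : d⁄dX R G = d.mapCoeffsPowerSeries G)
    (hP : d⁄dX R P = d.mapCoeffsPowerSeries P + C c * P)
    (hQ : d⁄dX R Q = d.mapCoeffsPowerSeries Q + C c * Q) :
    d⁄dX R (G * P - Q) = d.mapCoeffsPowerSeries (G * P - Q) + C c * (G * P - Q) := by
  simp only [map_sub, Derivation.leibniz, smul_eq_mul, hG, hP, hQ]
  ring

end ODE

section Trig

variable {R : Type*} [CommRing R]

/-- `egf (cosCoeff a)` and `egf (sinCoeff a)` are `cos (t √a)` and `sin (t √a) / √a`. -/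
def cosCoeff (a : R) (j : ℕ) : R := if Even j then (-a) ^ (j / 2) else 0

def sinCoeff (a : R) (j : ℕ) : R := if Even j then 0 else (-a) ^ (j / 2)

theorem cosCoeff_succ (a : R) (j : ℕ) : cosCoeff a (j + 1) = -a * sinCoeff a j := by
  rcases Nat.even_or_odd' j with ⟨k, rfl | rfl⟩
  · simp [cosCoeff, sinCoeff]
  · have h₁ : (2 * k + 1 + 1) / 2 = k + 1 := by omega
    have h₂ : (2 * k + 1) / 2 = k := by omega
    have h₃ : Even (2 * k + 1 + 1) := ⟨k + 1, by ring⟩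
    simp [cosCoeff, sinCoeff, h₁, h₂, h₃, pow_succ']

theorem sinCoeff_succ (a : R) (j : ℕ) : sinCoeff a (j + 1) = cosCoeff a j := by
  rcases Nat.even_or_odd' j with ⟨k, rfl | rfl⟩
  · have : (2 * k + 1) / 2 = k := by omega
    simp [cosCoeff, sinCoeff, this]
  · simp [cosCoeff, sinCoeff, Nat.even_add_one]

theorem derivation_cosCoeff_eq_zero {A : Type*} [CommRing A] [Algebra A R]
    {d : Derivation A R R} {a : R} (ha : d a = 0) (j : ℕ) : d (cosCoeff a j) = 0 := by
  unfold cosCoeff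
  split_ifs <;> simp [Derivation.leibniz_pow, ha]

theorem derivation_sinCoeff_eq_zero {A : Type*} [CommRing A] [Algebra A R]
    {d : Derivation A R R} {a : R} (ha : d a = 0) (j : ℕ) : d (sinCoeff a j) = 0 := by
  unfold sinCoeff
  split_ifs <;> simp [Derivation.leibniz_pow, ha]

end Trig

section EGF

variable {R : Type*} [CommRing R] [Algebra ℚ R]

noncomputable def egf (f : ℕ → R) : R⟦X⟧ :=
  mk fun n => (n.factorial : ℚ)⁻¹ • f n

@[simp]
theorem constantCoeff_egf (f : ℕ → R) : constantCoeff (egf f) = f 0 := by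
  simp [egf]

theorem derivative_egf (f : ℕ → R) : d⁄dX R (egf f) = egf fun n => f (n + 1) := by
  ext n
  have hfact : ((n + 1).factorial : ℚ)⁻¹ * (n + 1) = (n.factorial : ℚ)⁻¹ := by
    rw [Nat.factorial_succ]; push_cast; field_simp
  rw [coeff_derivative, egf, egf, coeff_mk, coeff_mk, mul_comm, ← Nat.cast_succ,
    ← nsmul_eq_mul, ← Nat.cast_smul_eq_nsmul ℚ, smul_smul, Nat.cast_succ, mul_comm, hfact]

theorem egf_const_mul (r : R) (f : ℕ → R) : (egf fun n => r * f n) = C r * egf f := by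
  ext n
  simp [egf, coeff_C_mul]

theorem mapCoeffsPowerSeries_egf {A : Type*} [CommRing A] [Algebra A R] (d : Derivation A R R)
    (f : ℕ → R) : d.mapCoeffsPowerSeries (egf f) = egf fun n => d (f n) := by
  ext n
  simp [egf, map_rat_smul]

theorem derivative_egf_iterate (d : Derivation ℚ R R) (r : R) :
    d⁄dX R (egf fun n => d^[n] r) = d.mapCoeffsPowerSeries (egf fun n => d^[n] r) := by
  simp only [derivative_egf, mapCoeffsPowerSeries_egf, Function.iterate_succ_apply']

theorem mapCoeffsPowerSeries_egf_eq_zero {A : Type*} [CommRing A] [Algebra A R]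
    {d : Derivation A R R} {f : ℕ → R} (hf : ∀ n, d (f n) = 0) :
    d.mapCoeffsPowerSeries (egf f) = 0 := by
  rw [mapCoeffsPowerSeries_egf]
  ext n
  simp [egf, hf]

theorem derivative_egf_cosCoeff (a : R) :
    d⁄dX R (egf (cosCoeff a)) = C (-a) * egf (sinCoeff a) := by
  simp only [derivative_egf, cosCoeff_succ, egf_const_mul]

theorem derivative_egf_sinCoeff (a : R) : d⁄dX R (egf (sinCoeff a)) = egf (cosCoeff a) := by
  simp only [derivative_egf, sinCoeff_succ]

end EGF

end PowerSeries

section Andre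

open PowerSeries (egf cosCoeff sinCoeff)
open scoped PowerSeries

noncomputable def andreGenDenominator : PowerSeries (MvPolynomial (Fin 2) ℚ) :=
  PowerSeries.C (X 0 - X 1 ^ 2) * sinSeries + PowerSeries.C (X 1) * cosSeries

noncomputable def andreGenNumerator : PowerSeries (MvPolynomial (Fin 2) ℚ) :=
  PowerSeries.C (X 0) + PowerSeries.C (X 1 * (2 * X 0 - X 1 ^ 2)) * sinSeries -
    PowerSeries.C (X 0 - X 1 ^ 2) * cosSeries

variable {D : Derivation ℚ (MvPolynomial (Fin 2) ℚ) (MvPolynomial (Fin 2) ℚ)}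

theorem cosSeries_eq_egf : cosSeries = egf (cosCoeff (2 * X 0 - X 1 ^ 2)) := by
  refine PowerSeries.ext fun j => ?_
  simp only [cosSeries, egf, cosCoeff, PowerSeries.coeff_mk]
  split_ifs
  · rw [mul_comm, mul_smul, neg_pow_eq_neg_one_pow_smul (2 * X 0 - X 1 ^ 2)]
  · rw [smul_zero]

theorem sinSeries_eq_egf : sinSeries = egf (sinCoeff (2 * X 0 - X 1 ^ 2)) := by
  refine PowerSeries.ext fun j => ?_
  simp only [sinSeries, egf, sinCoeff, PowerSeries.coeff_mk]
  split_ifs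
  · rw [smul_zero]
  · rw [mul_comm, mul_smul, neg_pow_eq_neg_one_pow_smul (2 * X 0 - X 1 ^ 2)]

theorem andreGen_eq_egf : andreGen D = egf fun n => D^[n] (X 1) := rfl

variable (D) in
theorem derivative_andreGen : d⁄dX _ (andreGen D) = D.mapCoeffsPowerSeries (andreGen D) :=
  PowerSeries.derivative_egf_iterate D (X 1)

variable (hx : D (X 0) = X 0 * X 1) (hy : D (X 1) = X 0)
include hx hy

theorem derivation_discriminant_eq_zero : D (2 * X 0 - X 1 ^ 2) = 0 := by
  simp only [map_sub, Derivation.leibniz, Derivation.leibniz_pow, Derivation.map_ofNat, hx, hy,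
    smul_eq_mul, nsmul_eq_mul]
  ring

theorem derivative_andreGenDenominator :
    d⁄dX _ andreGenDenominator =
      D.mapCoeffsPowerSeries andreGenDenominator + PowerSeries.C (-X 1) * andreGenDenominator := by
  have ha := derivation_discriminant_eq_zero hx hy
  rw [andreGenDenominator, sinSeries_eq_egf, cosSeries_eq_egf]
  simp only [map_add, map_sub, Derivation.leibniz, Derivation.leibniz_pow, smul_eq_mul,
    nsmul_eq_mul, mul_zero, add_zero, PowerSeries.derivative_C,
    PowerSeries.derivative_egf_cosCoeff, PowerSeries.derivative_egf_sinCoeff,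
    Derivation.mapCoeffsPowerSeries_C,
    PowerSeries.mapCoeffsPowerSeries_egf_eq_zero (PowerSeries.derivation_cosCoeff_eq_zero ha),
    PowerSeries.mapCoeffsPowerSeries_egf_eq_zero (PowerSeries.derivation_sinCoeff_eq_zero ha),
    hx, hy]
  simp only [map_sub, map_mul, map_neg, map_pow, map_natCast, map_ofNat]
  ring

theorem derivative_andreGenNumerator :
    d⁄dX _ andreGenNumerator =
      D.mapCoeffsPowerSeries andreGenNumerator + PowerSeries.C (-X 1) * andreGenNumerator := by
  have ha := derivation_discriminant_eq_zero hx hy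
  rw [andreGenNumerator, sinSeries_eq_egf, cosSeries_eq_egf]
  simp only [map_add, map_sub, Derivation.leibniz, Derivation.leibniz_pow, Derivation.map_ofNat,
    smul_eq_mul, nsmul_eq_mul, mul_zero, add_zero, PowerSeries.derivative_C,
    PowerSeries.derivative_egf_cosCoeff, PowerSeries.derivative_egf_sinCoeff,
    Derivation.mapCoeffsPowerSeries_C,
    PowerSeries.mapCoeffsPowerSeries_egf_eq_zero (PowerSeries.derivation_cosCoeff_eq_zero ha),
    PowerSeries.mapCoeffsPowerSeries_egf_eq_zero (PowerSeries.derivation_sinCoeff_eq_zero ha),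
    hx, hy]
  simp only [map_sub, map_mul, map_neg, map_pow, map_natCast, map_ofNat]
  ring

end Andre

/-- Foata–Schützenberger: `G · ((x-y²)S + yC) = x + y(2x-y²)S − (x-y²)C`. -/
theorem stmt9
    (D : Derivation ℚ (MvPolynomial (Fin 2) ℚ) (MvPolynomial (Fin 2) ℚ))
    (hx : D (X 0) = X 0 * X 1) (hy : D (X 1) = X 0) :
    andreGen D *
        (PowerSeries.C (R := MvPolynomial (Fin 2) ℚ) (X 0 - X 1 ^ 2) * sinSeries +
         PowerSeries.C (R := MvPolynomial (Fin 2) ℚ) (X 1) * cosSeries) =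
      PowerSeries.C (R := MvPolynomial (Fin 2) ℚ) (X 0) +
        PowerSeries.C (R := MvPolynomial (Fin 2) ℚ) (X 1 * (2 * X 0 - X 1 ^ 2)) * sinSeries -
        PowerSeries.C (R := MvPolynomial (Fin 2) ℚ) (X 0 - X 1 ^ 2) * cosSeries := by
  change andreGen D * andreGenDenominator = andreGenNumerator
  rw [← sub_eq_zero]
  refine PowerSeries.eq_zero_of_derivative_eq ?_ <|
    PowerSeries.derivative_mul_sub_eq (derivative_andreGen D)
      (derivative_andreGenDenominator hx hy) (derivative_andreGenNumerator hx hy)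
  rw [andreGen_eq_egf, andreGenDenominator, andreGenNumerator, sinSeries_eq_egf, cosSeries_eq_egf]
  simp [PowerSeries.cosCoeff, PowerSeries.sinCoeff]
  ring
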